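/- For all odd integers s, t ≥ 3, the derivative of the chromatic polynomial of X(s,t) evaluated at x = 2 equals -2; in particular the chromatic polynomial of X(s,t) is strictly positive on some interval (2 - β, 2) with β > 0. -/

import Mathlib

/-- The number of proper colorings of `G` with a palette of `k` colors. -/
noncomputable def numColorings {V : Type} [Fintype V] (G : SimpleGraph V) (k : ℕ) : ℕ :=
  Nat.card {f : V → Fin k // ∀ u v, G.Adj u v → f u ≠ f v}

/-- `P` is the chromatic polynomial of `G`: for every natural number `k`, evaluating `P`
at `k` gives the number of proper `k`-colorings of `G`. -/
def IsChromaticPolynomial {V : Type} [Fintype V] (G : SimpleGraph V) (P : Polynomial ℝ) : Prop :=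
  ∀ k : ℕ, P.eval (k : ℝ) = numColorings G k

/-- The adjacency-generating relation of the graph `X(s,t)`: the vertices `v0, v1, v2, v3, v4`
are `Sum.inl 0, …, Sum.inl 4`, the independent set `S` is `Fin s` (as `Sum.inr (Sum.inl _)`)
and the independent set `T` is `Fin t` (as `Sum.inr (Sum.inr _)`).  The edges are: `v1v2`,
`v3v4`, every vertex of `S` joined to each of `v0, v1, v3`, and every vertex of `T` joined
to each of `v0, v2, v4`. -/
def XAdj (s t : ℕ) (x y : Fin 5 ⊕ Fin s ⊕ Fin t) : Prop :=
  (x = Sum.inl 1 ∧ y = Sum.inl 2) ∨ (x = Sum.inl 3 ∧ y = Sum.inl 4) ∨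
    ((∃ i : Fin s, x = Sum.inr (Sum.inl i)) ∧ (y = Sum.inl 0 ∨ y = Sum.inl 1 ∨ y = Sum.inl 3)) ∨
    ((∃ j : Fin t, x = Sum.inr (Sum.inr j)) ∧ (y = Sum.inl 0 ∨ y = Sum.inl 2 ∨ y = Sum.inl 4))

/-- The graph `X(s,t)`. -/
def graphX (s t : ℕ) : SimpleGraph (Fin 5 ⊕ Fin s ⊕ Fin t) :=
  SimpleGraph.fromRel (XAdj s t)


/-! Colour `v0, …, v4` with `a, b, c, d, e`, subject to `b ≠ c` and `d ≠ e`; each vertex of `S`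
then has `k - #{a, b, d}` admissible colours and each vertex of `T` has `k - #{a, c, e}`.
Inclusion–exclusion on the two constraints reduces the count to row sums
`∑ d, (k - #{a, b, d}) ^ m`, which only depend on whether `b = a`; this gives an explicit
polynomial. At `x = 2` every term carrying a factor `(x - 2) ^ m` dies, so `P(2) = 0` and
`P'(2) = 2 ((-1) ^ s + (-1) ^ t + (-1) ^ (s + t))`, which is `-2` for odd `s, t`. A root at which
the derivative is negative makes `P` positive just to its left. -/

open Finset Polynomial

theorem sum_fun_fin_succ {α M : Type*} [Fintype α] [AddCommMonoid M] {n : ℕ}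
    (F : (Fin (n + 1) → α) → M) :
    ∑ g, F g = ∑ a, ∑ g : Fin n → α, F (Matrix.vecCons a g) :=
  ((Fin.consEquiv fun _ => α).sum_comp F).symm.trans (Fintype.sum_prod_type _)

theorem sum_fun_sum_type {α β γ M : Type*} [Fintype α] [Fintype β] [Fintype γ] [DecidableEq α]
    [DecidableEq β] [AddCommMonoid M] (F : (α ⊕ β → γ) → M) :
    ∑ f, F f = ∑ g, ∑ h, F (Sum.elim g h) :=
  ((Equiv.sumArrowEquivProdArrow α β γ).symm.sum_comp F).symm.trans (Fintype.sum_prod_type _)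

theorem sum_boole_forall_notMem {ι α : Type*} [Fintype ι] [DecidableEq ι] [Fintype α]
    [DecidableEq α] (F : Finset α) [DecidablePred fun u : ι → α => ∀ i, u i ∉ F] :
    ∑ u : ι → α, (if ∀ i, u i ∉ F then (1 : ℝ) else 0) =
      ((Fintype.card α : ℝ) - #F) ^ Fintype.card ι := by
  rw [sum_boole, ← Fintype.card_subtype,
    Fintype.card_congr (Equiv.subtypePiEquivPi (p := fun (_ : ι) (c : α) => c ∉ F)),
    Fintype.card_pi, prod_const, card_univ, Fintype.card_subtype_compl, Fintype.card_coe,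
    Nat.cast_pow, Nat.cast_sub (card_le_univ F)]

theorem sum_card_insert {α M : Type*} [Fintype α] [DecidableEq α] [AddCommMonoid M]
    (F : Finset α) (φ : ℕ → M) :
    ∑ d, φ #(insert d F) = #F • φ #F + (Fintype.card α - #F) • φ (#F + 1) := by
  have hF : ∑ d ∈ F, φ #(insert d F) = ∑ d ∈ F, φ #F :=
    sum_congr rfl fun d hd => by rw [insert_eq_of_mem hd]
  have hFc : ∑ d ∈ Fᶜ, φ #(insert d F) = ∑ d ∈ Fᶜ, φ (#F + 1) :=
    sum_congr rfl fun d hd => by rw [card_insert_of_notMem (mem_compl.mp hd)]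
  rw [← sum_add_sum_compl F, hF, hFc, sum_const, sum_const, card_compl]

theorem sum_ite_eq_add_mul {α R : Type*} [Fintype α] [DecidableEq α] [CommRing R] (a : α)
    (p q : R) :
    ∑ b, (if b = a then p else q) = p + (Fintype.card α - 1) * q := by
  rw [← add_sum_erase _ _ (mem_univ a), if_pos rfl,
    sum_congr rfl fun b hb => if_neg (ne_of_mem_erase hb)]
  simp [card_erase_of_mem, Nat.cast_sub (Fintype.card_pos_iff.mpr ⟨a⟩)]

theorem sum_sum_ite_ne {β M : Type*} [Fintype β] [DecidableEq β] [AddCommGroup M]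
    (F : β → β → M) :
    ∑ b, ∑ c, (if b ≠ c then F b c else 0) = ∑ b, ∑ c, F b c - ∑ b, F b b := by
  rw [← sum_sub_distrib]
  refine sum_congr rfl fun b _ => ?_
  rw [← sum_filter, filter_ne, sum_erase_eq_sub (mem_univ b)]

theorem sum_ite_ne_and_ne {β R : Type*} [Fintype β] [DecidableEq β] [CommRing R]
    (f g : β → β → R) :
    ∑ b, ∑ c, ∑ d, ∑ e, (if b ≠ c ∧ d ≠ e then f b d * g c e else 0) =
      (∑ b, ∑ d, f b d) * (∑ c, ∑ e, g c e) - ∑ b, (∑ d, f b d) * (∑ e, g b e) -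
        ∑ d, (∑ b, f b d) * (∑ c, g c d) + ∑ b, ∑ d, f b d * g b d := by
  have swap : ∑ b, ∑ c, ∑ d, f b d * g c d = ∑ d, (∑ b, f b d) * (∑ c, g c d) := by
    simp only [sum_mul_sum]
    exact (sum_congr rfl fun _ _ => sum_comm).trans sum_comm
  simp only [ite_and, sum_ite_irrel, sum_const_zero, sum_sum_ite_ne, ← mul_sum, ← sum_mul]
  simp only [sum_sub_distrib, swap, ← sum_mul_sum]
  ring

/-- Given `n` distinct colours already used on a set `F`, the number of ways to colour a new vertex
`d` and then `m` vertices each adjacent to all of `F ∪ {d}`. -/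
noncomputable def extensionPoly (m n : ℕ) : ℝ[X] :=
  (n : ℝ[X]) * (X - (n : ℝ[X])) ^ m + (X - (n : ℝ[X])) * (X - (n : ℝ[X]) - 1) ^ m

noncomputable def fanPoly (m : ℕ) : ℝ[X] := extensionPoly m 1 + (X - 1) * extensionPoly m 2

/-- The number of colourings of `X(s,t)` with the colour of `v0` fixed, by inclusion–exclusion
on the constraints `v1 ≠ v2` and `v3 ≠ v4`. -/
noncomputable def rootedPolyX (s t : ℕ) : ℝ[X] :=
  fanPoly s * fanPoly t -
    2 * (extensionPoly s 1 * extensionPoly t 1 +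
      (X - 1) * (extensionPoly s 2 * extensionPoly t 2)) +
    fanPoly (s + t)

noncomputable def chromPolyX (s t : ℕ) : ℝ[X] := X * rootedPolyX s t

theorem sum_sub_card_insert_pow {α : Type*} [Fintype α] [DecidableEq α] (F : Finset α) (m : ℕ) :
    ∑ d, ((Fintype.card α : ℝ) - #(insert d F)) ^ m =
      (extensionPoly m #F).eval (Fintype.card α : ℝ) := by
  rw [sum_card_insert F fun n => ((Fintype.card α : ℝ) - n) ^ m]
  simp only [extensionPoly, nsmul_eq_mul, Nat.cast_sub (card_le_univ F), eval_add, eval_mul,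
    eval_pow, eval_sub, eval_X, eval_natCast, eval_one, Nat.cast_add, Nat.cast_one]
  ring

theorem sum_sub_card_triple_pow {k : ℕ} (m : ℕ) (a b : Fin k) :
    ∑ d, ((k : ℝ) - #({a, b, d} : Finset (Fin k))) ^ m =
      if b = a then (extensionPoly m 1).eval (k : ℝ) else (extensionPoly m 2).eval (k : ℝ) := by
  have hcard : #{a, b} = if b = a then 1 else 2 := by
    split_ifs with h
    · simp [h]
    · exact card_pair (Ne.symm h)
  calc ∑ d, ((k : ℝ) - #({a, b, d} : Finset (Fin k))) ^ m
      = ∑ d, ((Fintype.card (Fin k) : ℝ) - #(insert d {a, b})) ^ m := by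
        refine sum_congr rfl fun d _ => ?_
        rw [Fintype.card_fin,
          show ({a, b, d} : Finset (Fin k)) = insert d {a, b} by ext; simp; tauto]
    _ = _ := by rw [sum_sub_card_insert_pow, hcard, Fintype.card_fin]; split_ifs <;> rfl

theorem sum_sum_sub_card_triple_pow {k : ℕ} (m : ℕ) (a : Fin k) :
    ∑ b, ∑ d, ((k : ℝ) - #({a, b, d} : Finset (Fin k))) ^ m = (fanPoly m).eval (k : ℝ) := by
  simp only [sum_sub_card_triple_pow, sum_ite_eq_add_mul, fanPoly, Fintype.card_fin]
  simp

theorem sum_mul_sum_sub_card_triple_pow {k : ℕ} (s t : ℕ) (a : Fin k) :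
    ∑ b, (∑ d, ((k : ℝ) - #({a, b, d} : Finset (Fin k))) ^ s) *
        (∑ e, ((k : ℝ) - #({a, b, e} : Finset (Fin k))) ^ t) =
      (extensionPoly s 1 * extensionPoly t 1 +
        (X - 1) * (extensionPoly s 2 * extensionPoly t 2)).eval (k : ℝ) := by
  simp only [sum_sub_card_triple_pow, ite_mul_ite, sum_ite_eq_add_mul, Fintype.card_fin]
  simp

theorem sum_rooted_eq_rootedPolyX_eval (s t k : ℕ) (a : Fin k) :
    ∑ b, ∑ c, ∑ d, ∑ e, (if b ≠ c ∧ d ≠ e then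
        ((k : ℝ) - #({a, b, d} : Finset (Fin k))) ^ s *
          ((k : ℝ) - #({a, c, e} : Finset (Fin k))) ^ t
      else 0) = (rootedPolyX s t).eval (k : ℝ) := by
  have hsymm : ∀ (m : ℕ) (b d : Fin k), ((k : ℝ) - #({a, b, d} : Finset (Fin k))) ^ m =
      ((k : ℝ) - #({a, d, b} : Finset (Fin k))) ^ m := by
    intro m b d; rw [pair_comm]
  have hcol : ∑ d, (∑ b, ((k : ℝ) - #({a, b, d} : Finset (Fin k))) ^ s) *
      (∑ c, ((k : ℝ) - #({a, c, d} : Finset (Fin k))) ^ t) =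
      ∑ b, (∑ d, ((k : ℝ) - #({a, b, d} : Finset (Fin k))) ^ s) *
        (∑ e, ((k : ℝ) - #({a, b, e} : Finset (Fin k))) ^ t) :=
    sum_congr rfl fun d _ => by simp only [hsymm s _ d, hsymm t _ d]
  rw [sum_ite_ne_and_ne, hcol, sum_mul_sum_sub_card_triple_pow]
  simp only [← pow_add, sum_sum_sub_card_triple_pow, rootedPolyX, eval_add, eval_sub, eval_mul,
    eval_ofNat]
  ring

theorem graphX_proper_iff {s t k : ℕ} (g : Fin 5 → Fin k) (u : Fin s → Fin k)
    (v : Fin t → Fin k) :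
    (∀ x y, (graphX s t).Adj x y → Sum.elim g (Sum.elim u v) x ≠ Sum.elim g (Sum.elim u v) y) ↔
      (g 1 ≠ g 2 ∧ g 3 ≠ g 4) ∧ (∀ i, u i ∉ ({g 0, g 1, g 3} : Finset (Fin k))) ∧
        ∀ j, v j ∉ ({g 0, g 2, g 4} : Finset (Fin k)) := by
  simp only [graphX, SimpleGraph.fromRel_adj, XAdj, mem_insert, mem_singleton, not_or]
  constructor
  · intro h
    refine ⟨⟨h (.inl 1) (.inl 2) ?_, h (.inl 3) (.inl 4) ?_⟩,
      fun i => ⟨h (.inr (.inl i)) (.inl 0) ?_, h (.inr (.inl i)) (.inl 1) ?_,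
        h (.inr (.inl i)) (.inl 3) ?_⟩,
      fun j => ⟨h (.inr (.inr j)) (.inl 0) ?_, h (.inr (.inr j)) (.inl 2) ?_,
        h (.inr (.inr j)) (.inl 4) ?_⟩⟩ <;> simp
  · rintro ⟨⟨h12, h34⟩, hS, hT⟩ x y ⟨-, h | h⟩ <;>
    rcases h with ⟨rfl, rfl⟩ | ⟨rfl, rfl⟩ | ⟨⟨i, rfl⟩, (rfl | rfl | rfl)⟩ |
      ⟨⟨j, rfl⟩, (rfl | rfl | rfl)⟩ <;>
    simp_all [eq_comm]

theorem sum_boole_graphX_proper {s t k : ℕ} (g : Fin 5 → Fin k) :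
    ∑ u : Fin s → Fin k, ∑ v : Fin t → Fin k,
      (if (g 1 ≠ g 2 ∧ g 3 ≠ g 4) ∧ (∀ i, u i ∉ ({g 0, g 1, g 3} : Finset (Fin k))) ∧
        ∀ j, v j ∉ ({g 0, g 2, g 4} : Finset (Fin k)) then (1 : ℝ) else 0) =
      if g 1 ≠ g 2 ∧ g 3 ≠ g 4 then
        ((k : ℝ) - #({g 0, g 1, g 3} : Finset (Fin k))) ^ s *
          ((k : ℝ) - #({g 0, g 2, g 4} : Finset (Fin k))) ^ t
      else 0 := by
  have hboole : ∀ (P Q : Prop) [Decidable P] [Decidable Q],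
      (if P ∧ Q then (1 : ℝ) else 0) = (if P then 1 else 0) * (if Q then 1 else 0) := by
    intro P Q _ _; rw [ite_zero_mul_ite_zero, mul_one]
  split_ifs with hg
  · simp only [and_iff_right hg, hboole, ← sum_mul_sum]
    rw [sum_boole_forall_notMem, sum_boole_forall_notMem]
    simp only [Fintype.card_fin]
  · simp [hg]

/-- Here `a, b, c, d, e` are the colours of `v0, …, v4`. -/
theorem numColorings_graphX (s t k : ℕ) :
    (numColorings (graphX s t) k : ℝ) =
      ∑ a : Fin k, ∑ b, ∑ c, ∑ d, ∑ e, (if b ≠ c ∧ d ≠ e then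
        ((k : ℝ) - #({a, b, d} : Finset (Fin k))) ^ s *
          ((k : ℝ) - #({a, c, e} : Finset (Fin k))) ^ t
      else 0) := by
  classical
  rw [numColorings, Nat.card_eq_fintype_card, Fintype.card_subtype, natCast_card_filter]
  simp only [sum_fun_sum_type, graphX_proper_iff, sum_boole_graphX_proper, sum_fun_fin_succ]
  simp
  -- the two sides now differ only in their `Decidable` instances
  rfl

theorem isChromaticPolynomial_chromPolyX (s t : ℕ) :
    IsChromaticPolynomial (graphX s t) (chromPolyX s t) := fun k => by
  simp [numColorings_graphX, sum_rooted_eq_rootedPolyX_eval, chromPolyX]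

theorem IsChromaticPolynomial.eq {V : Type} [Fintype V] {G : SimpleGraph V} {P Q : ℝ[X]}
    (hP : IsChromaticPolynomial G P) (hQ : IsChromaticPolynomial G Q) : P = Q :=
  eq_of_infinite_eval_eq P Q <|
    Set.infinite_of_injective_forall_mem Nat.cast_injective fun n => by simp [hP n, hQ n]

section EvalTwo

variable {m : ℕ}

theorem extensionPoly_one_eval_two (hm : m ≠ 0) : (extensionPoly m 1).eval 2 = 1 := by
  norm_num [extensionPoly, zero_pow hm]

theorem extensionPoly_two_eval_two (hm : m ≠ 0) : (extensionPoly m 2).eval 2 = 0 := by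
  norm_num [extensionPoly, zero_pow hm]

theorem fanPoly_eval_two (hm : m ≠ 0) : (fanPoly m).eval 2 = 1 := by
  norm_num [fanPoly, extensionPoly_one_eval_two hm, extensionPoly_two_eval_two hm]

theorem derivative_extensionPoly_one_eval_two (hm : 2 ≤ m) :
    (derivative (extensionPoly m 1)).eval 2 = m := by
  simp [extensionPoly, derivative_mul, derivative_pow]
  norm_num [show m ≠ 0 by omega, show m - 1 ≠ 0 by omega]

theorem derivative_extensionPoly_two_eval_two (hm : 2 ≤ m) :
    (derivative (extensionPoly m 2)).eval 2 = (-1) ^ m := by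
  simp [extensionPoly, derivative_mul, derivative_pow]
  norm_num [show m ≠ 0 by omega, show m - 1 ≠ 0 by omega]

theorem derivative_fanPoly_eval_two (hm : 2 ≤ m) :
    (derivative (fanPoly m)).eval 2 = m + (-1) ^ m := by
  simp [fanPoly, derivative_mul, derivative_extensionPoly_one_eval_two hm,
    derivative_extensionPoly_two_eval_two hm, extensionPoly_two_eval_two (show m ≠ 0 by omega)]
  norm_num

end EvalTwo

theorem chromPolyX_eval_two {s t : ℕ} (hs : s ≠ 0) (ht : t ≠ 0) :
    (chromPolyX s t).eval 2 = 0 := by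
  simp [chromPolyX, rootedPolyX, fanPoly_eval_two, extensionPoly_one_eval_two,
    extensionPoly_two_eval_two, hs, ht]
  norm_num

theorem derivative_chromPolyX_eval_two {s t : ℕ} (hs : 2 ≤ s) (ht : 2 ≤ t) :
    (derivative (chromPolyX s t)).eval 2 = 2 * ((-1) ^ s + (-1) ^ t + (-1) ^ (s + t)) := by
  simp [chromPolyX, rootedPolyX, derivative_mul, fanPoly_eval_two, extensionPoly_one_eval_two,
    extensionPoly_two_eval_two, derivative_fanPoly_eval_two, derivative_extensionPoly_one_eval_two,
    derivative_extensionPoly_two_eval_two, hs, ht, show s ≠ 0 by omega, show t ≠ 0 by omega,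
    derivative_fanPoly_eval_two (show 2 ≤ s + t by omega)]
  ring

theorem exists_pos_left_of_deriv_neg_of_eq_zero {f : ℝ → ℝ} {a : ℝ} (hd : deriv f a < 0)
    (h0 : f a = 0) : ∃ β, 0 < β ∧ ∀ x, a - β < x → x < a → 0 < f x := by
  obtain ⟨ε, hε, hsign⟩ :=
    Metric.eventually_nhds_iff.mp (eventually_nhdsWithin_sign_eq_of_deriv_neg hd h0)
  refine ⟨ε, hε, fun x hx₁ hx₂ => ?_⟩
  have := hsign (show dist x a < ε by rw [Real.dist_eq, abs_sub_lt_iff]; constructor <;> linarith)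
  rwa [sign_pos (sub_pos.mpr hx₂), sign_eq_one_iff] at this

/-- For all odd `s, t ≥ 3`, the derivative of the chromatic polynomial of `X(s,t)` evaluated
at `x = 2` equals `-2`; in particular the chromatic polynomial of `X(s,t)` is strictly
positive on some interval `(2 - β, 2)` with `β > 0`. -/
theorem derivative_chromaticPolynomial_graphX_at_two_of_odd (s t : ℕ) (hs : 3 ≤ s) (ht : 3 ≤ t)
    (hsodd : Odd s) (htodd : Odd t)
    (P : Polynomial ℝ) (hP : IsChromaticPolynomial (graphX s t) P) :
    (Polynomial.derivative P).eval 2 = -2 ∧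
      ∃ β : ℝ, 0 < β ∧ ∀ x : ℝ, 2 - β < x → x < 2 → 0 < P.eval x := by
  obtain rfl := hP.eq (isChromaticPolynomial_chromPolyX s t)
  have hderiv : (derivative (chromPolyX s t)).eval 2 = -2 := by
    rw [derivative_chromPolyX_eval_two (by omega) (by omega), hsodd.neg_one_pow,
      htodd.neg_one_pow, (hsodd.add_odd htodd).neg_one_pow]
    norm_num
  refine ⟨hderiv, exists_pos_left_of_deriv_neg_of_eq_zero ?_
    (chromPolyX_eval_two (by omega) (by omega))⟩
  rw [Polynomial.deriv, hderiv]
  norm_num
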